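/- arXiv:2111.13527 — 7 statements merged into one kernel-verified Lean document; each statement's English description precedes it below -/
import Mathlib

section
/- Let G be a transitive permutation group on [n] and f : [n] → [n] a transformation of rank n−1. Then there exists an idempotent transformation h : [n] → [n] of rank n−1 such that h lies in the transformation monoid generated by G ∪ {f}. -/
open Finset

/-- The set of functions on `Fin n` arising from elements of the permutation group `G`. -/
def permSet {n : ℕ} (G : Subgroup (Equiv.Perm (Fin n))) : Set (Function.End (Fin n)) :=
  {h | ∃ g ∈ G, h = ⇑g}

/-- The transformation monoid generated by `G ∪ {f}`. -/
def genMon {n : ℕ} (G : Subgroup (Equiv.Perm (Fin n))) (f : Fin n → Fin n) :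
    Submonoid (Function.End (Fin n)) :=
  Submonoid.closure (permSet G ∪ {f})

/-- A permutation group is primitive if no subset `Δ` with `1 < |Δ| < n` is a block. -/
def IsPrimitive' {n : ℕ} (G : Subgroup (Equiv.Perm (Fin n))) : Prop :=
  ¬ ∃ Δ : Finset (Fin n), 1 < Δ.card ∧ Δ.card < n ∧
      ∀ g ∈ G, Δ.image ⇑g = Δ ∨ Disjoint (Δ.image ⇑g) Δ

/-!
Since `f` has rank `n - 1`, it identifies two points `a ≠ b` and misses some point `m`. By
transitivity some `g ∈ G` sends `m` to `a`, and `w = g ∘ f` then has image `[n] \ {a}` while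
`w a = w b`; so `w` maps its image onto itself and every positive power of `w` has rank `n - 1`.
The monoid being finite, some positive power of `w` is idempotent.
-/

open Function

/-- Pigeonhole gives `x ^ i = x ^ j` with `i < j`, so `x ^ i` is a periodic point of left
multiplication by `x`, and so is `x ^ k` for `k ≥ i` a multiple of the period; for such `k`
this says `x ^ k * x ^ k = x ^ k`. -/
theorem exists_pow_isIdempotentElem {M : Type*} [Monoid M] [Finite M] (x : M) :
    ∃ k ≠ 0, IsIdempotentElem (x ^ k) := by
  obtain ⟨i, j, hne, hij⟩ := Finite.exists_ne_map_eq_of_infinite (x ^ · : ℕ → M)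
  wlog hlt : i < j generalizing i j
  · exact this j i hne.symm hij.symm (by omega)
  obtain ⟨p, rfl⟩ : ∃ p, j = i + (p + 1) := ⟨j - i - 1, by omega⟩
  have hper : IsPeriodicPt (x * ·) (p + 1) (x ^ i) := by
    simp only [IsPeriodicPt, IsFixedPt, mul_left_iterate, ← pow_add, add_comm (p + 1)]
    exact hij.symm
  have hik : i ≤ (i + 1) * (p + 1) := by nlinarith
  have hk := (hper.apply_iterate ((i + 1) * (p + 1) - i)).const_mul (i + 1)
  simp only [mul_left_iterate, ← pow_add, Nat.sub_add_cancel hik] at hk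
  refine ⟨(i + 1) * (p + 1), by positivity, ?_⟩
  simpa only [IsIdempotentElem, IsPeriodicPt, IsFixedPt, mul_left_iterate] using hk

section Image

variable {α : Type*} [Fintype α] [DecidableEq α]

theorem image_iterate_succ_of_image_comp_self {w : α → α}
    (h : univ.image (w ∘ w) = univ.image w) (k : ℕ) :
    univ.image w^[k + 1] = univ.image w := by
  induction k with
  | zero => rfl
  | succ k ih => rw [iterate_succ', ← image_image, ih, image_image, h]

theorem image_comp_self_of_image_eq_erase {w : α → α} {a b : α} (hab : a ≠ b)
    (hw : w a = w b) (himage : univ.image w = univ.erase a) :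
    univ.image (w ∘ w) = univ.image w := by
  have hwa : w a ∈ (univ.erase a).image w :=
    hw ▸ mem_image_of_mem w (mem_erase.2 ⟨hab.symm, mem_univ b⟩)
  calc univ.image (w ∘ w) = (univ.erase a).image w := by rw [← image_image, himage]
    _ = insert (w a) ((univ.erase a).image w) := (insert_eq_of_mem hwa).symm
    _ = univ.image w := by rw [← image_insert, insert_erase (mem_univ a)]

end Image

theorem exists_mem_genMon_image_eq_erase {n : ℕ} (hn : n ≠ 0)
    {G : Subgroup (Equiv.Perm (Fin n))} (hG : ∀ a b : Fin n, ∃ g ∈ G, g a = b)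
    {f : Fin n → Fin n} (hf : (univ.image f).card = n - 1) :
    ∃ w ∈ genMon G f, ∃ a b, a ≠ b ∧ w a = w b ∧ univ.image w = univ.erase a := by
  have hinj : ¬ Injective f := fun h => by
    rw [card_image_of_injective _ h, card_univ, Fintype.card_fin] at hf
    omega
  obtain ⟨a, b, hfab, hab⟩ := not_injective_iff.mp hinj
  obtain ⟨m, hm⟩ : ∃ m, ∀ x, f x ≠ m := by
    simpa [Surjective] using mt Finite.injective_iff_surjective.mpr hinj
  obtain ⟨g, hg, hgm⟩ := hG m a
  refine ⟨g ∘ f, mul_mem (Submonoid.subset_closure (Or.inl ⟨g, hg, rfl⟩))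
    (Submonoid.subset_closure (Or.inr rfl)), a, b, hab, by simp [hfab], ?_⟩
  refine eq_of_subset_of_card_le (fun y hy => ?_) ?_
  · obtain ⟨x, -, rfl⟩ := mem_image.mp hy
    exact mem_erase.2 ⟨fun h => hm x (g.injective (h.trans hgm.symm)), mem_univ _⟩
  · rw [← image_image, card_image_of_injective _ g.injective, hf,
      card_erase_of_mem (mem_univ a), card_univ, Fintype.card_fin]

theorem exists_idempotent_in_genMon {n : ℕ} (G : Subgroup (Equiv.Perm (Fin n)))
    (hG : ∀ a b : Fin n, ∃ g ∈ G, g a = b)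
    (f : Fin n → Fin n) (hf : (univ.image f).card = n - 1) :
    ∃ h : Fin n → Fin n, h ∈ genMon G f ∧ h ∘ h = h ∧
      (univ.image h).card = n - 1 := by
  rcases Nat.eq_zero_or_pos n with rfl | hn
  · exact ⟨id, one_mem _, rfl, by simp⟩
  obtain ⟨w, hw, a, b, hab, hwab, himage⟩ := exists_mem_genMon_image_eq_erase hn.ne' hG hf
  have : Finite (Function.End (Fin n)) := inferInstanceAs (Finite (Fin n → Fin n))
  obtain ⟨k, hk, hidem⟩ := exists_pow_isIdempotentElem w
  obtain ⟨k, rfl⟩ := Nat.exists_eq_succ_of_ne_zero hk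
  refine ⟨w ^ (k + 1), pow_mem hw _, hidem, ?_⟩
  have hrank := image_iterate_succ_of_image_comp_self
    (image_comp_self_of_image_eq_erase hab hwab himage) k
  rw [show ((w ^ (k + 1) : Function.End (Fin n)) : Fin n → Fin n) = w^[k + 1] from rfl, hrank,
    himage, card_erase_of_mem (mem_univ a), card_univ, Fintype.card_fin]
end

section
/- Let G be a permutation group on [n] and f : [n] → [n] an idempotent map of rank n−1 such that the transformation monoid M generated by G ∪ {f} contains a constant map. Then for all distinct 2-element subsets {a,b}, {c,d} of [n], there exists h ∈ M such that exactly one of h({a,b}), h({c,d}) is a singleton. -/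
open Finset

/-!
Write the constant map as a word in the generators and peel off the letter `g` applied first.
A permutation never merges two 2-sets. Being idempotent of rank `n - 1`, `f` moves at most one
point `u` (the moved points lie outside its image), so the only 2-set it collapses is `{u, f u}`
and, if it maps two distinct 2-sets onto the same 2-set, that image is one of them. Hence either
`g` separates the two 2-sets, or the rest of the word collapses one of two distinct image 2-sets
(or one of the original ones), and induction on the length of the word applies.
-/

section

variable {α : Type*} [DecidableEq α] {g m : α → α} {P Q : Finset α}

def Collapses (g : α → α) (P : Finset α) : Prop := #(P.image g) = 1

def Distinguishes (g : α → α) (P Q : Finset α) : Prop := Xor (Collapses g P) (Collapses g Q)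

lemma Distinguishes.symm (h : Distinguishes g P Q) : Distinguishes g Q P := by
  rwa [Distinguishes, xor_comm]

lemma collapses_comp_iff : Collapses (m ∘ g) P ↔ Collapses m (P.image g) := by
  rw [Collapses, Collapses, image_image]

lemma Distinguishes.comp (h : Distinguishes m (P.image g) (Q.image g)) :
    Distinguishes (m ∘ g) P Q := by
  rwa [Distinguishes, collapses_comp_iff, collapses_comp_iff]

lemma collapses_pair_iff {x y : α} : Collapses g {x, y} ↔ g x = g y := by
  rcases eq_or_ne (g x) (g y) with h | h <;> simp [Collapses, h]

lemma card_image_eq_two_of_not_collapses (hP : #P = 2) (hg : ¬ Collapses g P) :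
    #(P.image g) = 2 := by
  have hpos : 0 < #(P.image g) := ((card_pos.mp (by omega : 0 < #P)).image g).card_pos
  have hle : #(P.image g) ≤ 2 := hP ▸ card_image_le
  unfold Collapses at hg
  omega

lemma exists_eq_pair_of_mem (hP : #P = 2) {u : α} (hu : u ∈ P) :
    ∃ w, w ≠ u ∧ P = {u, w} := by
  obtain ⟨x, y, hxy, rfl⟩ := card_eq_two.mp hP
  rcases mem_insert.mp hu with rfl | hu
  · exact ⟨y, hxy.symm, rfl⟩
  · rw [mem_singleton.mp hu]
    exact ⟨x, hxy, pair_comm _ _⟩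

/-- What the induction needs of each generator of the monoid. -/
structure PairTame (g : α → α) : Prop where
  not_collapses_both : ∀ ⦃P Q : Finset α⦄, #P = 2 → #Q = 2 → P ≠ Q →
    Collapses g P → ¬ Collapses g Q
  image_eq_of_image_eq : ∀ ⦃P Q : Finset α⦄, #P = 2 → #Q = 2 → P ≠ Q →
    P.image g = Q.image g → P.image g = P ∨ P.image g = Q

lemma pairTame_of_injective (hg : Function.Injective g) : PairTame g where
  not_collapses_both P _ hP _ _ hcP _ := by
    rw [Collapses, card_image_of_injective P hg, hP] at hcP
    omega
  image_eq_of_image_eq _ _ _ _ hPQ himg := absurd (image_injective hg himg) hPQ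

lemma image_eq_self_of_forall_apply_eq (h : ∀ x ∈ P, g x = x) : P.image g = P :=
  (image_congr h).trans image_id'

lemma pair_eq_of_apply_eq (hg : {x | g x ≠ x}.Subsingleton) {x y u : α} (hxy : x ≠ y)
    (h : g x = g y) (hu : g u ≠ u) : ({x, y} : Finset α) = {u, g u} := by
  by_cases hx : g x = x
  · have hy : g y ≠ y := fun hy => hxy (by rw [← hx, h, hy])
    obtain rfl := hg hy hu
    rw [← h, hx, pair_comm]
  · obtain rfl := hg hx hu
    have hy : g y = y := by
      by_contra hy
      exact hxy (hg hx hy)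
    rw [h, hy]

lemma pairTame_of_subsingleton_moved (hg : {x | g x ≠ x}.Subsingleton) : PairTame g where
  not_collapses_both P Q hP hQ hPQ hcP hcQ := by
    obtain ⟨x, y, hxy, rfl⟩ := card_eq_two.mp hP
    obtain ⟨x', y', hxy', rfl⟩ := card_eq_two.mp hQ
    rw [collapses_pair_iff] at hcP hcQ
    obtain ⟨u, hu⟩ : ∃ u, g u ≠ u := by
      by_contra! hfix
      exact hxy (by rw [← hfix x, hcP, hfix y])
    exact hPQ ((pair_eq_of_apply_eq hg hxy hcP hu).trans (pair_eq_of_apply_eq hg hxy' hcQ hu).symm)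
  image_eq_of_image_eq P Q hP hQ hPQ himg := by
    by_contra! hne
    obtain ⟨u, huP, hu⟩ : ∃ u ∈ P, g u ≠ u := by
      by_contra! hfix
      exact hne.1 (image_eq_self_of_forall_apply_eq hfix)
    obtain ⟨v, hvQ, hv⟩ : ∃ v ∈ Q, g v ≠ v := by
      by_contra! hfix
      exact hne.2 (himg.trans (image_eq_self_of_forall_apply_eq hfix))
    obtain rfl := hg hv hu
    obtain ⟨w, hwv, rfl⟩ := exists_eq_pair_of_mem hP huP
    obtain ⟨w', hw'v, rfl⟩ := exists_eq_pair_of_mem hQ hvQ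
    have hw : g w = w := by
      by_contra h
      exact hwv (hg h hv)
    have hw' : g w' = w' := by
      by_contra h
      exact hw'v (hg h hv)
    simp only [image_insert, image_singleton, hw, hw'] at himg
    -- both `w` and `w'` must be the common point `g v`
    have hw_mem : w ∈ ({g v, w'} : Finset α) :=
      himg ▸ mem_insert_of_mem (mem_singleton_self w)
    have hw'_mem : w' ∈ ({g v, w} : Finset α) :=
      himg.symm ▸ mem_insert_of_mem (mem_singleton_self w')
    grind

lemma subsingleton_moved_of_idempotent [Fintype α] (hidem : g ∘ g = g)
    (hrank : Fintype.card α ≤ #(univ.image g) + 1) : {x | g x ≠ x}.Subsingleton := by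
  have moved_notMem : ∀ x, g x ≠ x → x ∈ (univ.image g)ᶜ := by
    intro x hx
    simp only [mem_compl, mem_image, mem_univ, true_and, not_exists]
    rintro z rfl
    exact hx (congrFun hidem z)
  have hcompl : #(univ.image g)ᶜ ≤ 1 := by
    rw [card_compl]
    omega
  exact fun x hx y hy => card_le_one.mp hcompl x (moved_notMem x hx) y (moved_notMem y hy)

theorem exists_distinguishes_of_collapses {S : Set (Function.End α)}
    (hS : ∀ g ∈ S, PairTame g) {h : Function.End α} (hh : h ∈ Submonoid.closure S)
    (hP : #P = 2) (hQ : #Q = 2) (hPQ : P ≠ Q) (hc : Collapses h P) :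
    ∃ m ∈ Submonoid.closure S, Distinguishes m P Q := by
  induction hh using Submonoid.closure_induction_right generalizing P Q with
  | one =>
    have hid : Collapses id P := hc
    rw [Collapses, image_id, hP] at hid
    omega
  | mul_right x _ g hg ih =>
    have hgS := Submonoid.subset_closure hg
    by_cases hdist : Distinguishes g P Q
    · exact ⟨g, hgS, hdist⟩
    have hiff : Collapses g P ↔ Collapses g Q := by
      unfold Distinguishes at hdist
      rwa [xor_iff_not_iff, not_not] at hdist
    have hgP : ¬ Collapses g P := fun hgP =>
      (hS g hg).not_collapses_both hP hQ hPQ hgP (hiff.mp hgP)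
    have hgQ : ¬ Collapses g Q := fun hgQ => hgP (hiff.mpr hgQ)
    replace hc : Collapses x (P.image g) := collapses_comp_iff.mp hc
    by_cases himg : P.image g = Q.image g
    · rcases (hS g hg).image_eq_of_image_eq hP hQ hPQ himg with hgP | hgQ
      · exact ih hP hQ hPQ (hgP ▸ hc)
      · obtain ⟨m, hm, hmQP⟩ := ih hQ hP hPQ.symm (hgQ ▸ hc)
        exact ⟨m, hm, hmQP.symm⟩
    · obtain ⟨m, hm, hmPQ⟩ := ih (card_image_eq_two_of_not_collapses hP hgP)
        (card_image_eq_two_of_not_collapses hQ hgQ) himg hc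
      exact ⟨m * g, mul_mem hm hgS, hmPQ.comp⟩

end

theorem prim_grp_distinguishes_2_sets {n : ℕ} (G : Subgroup (Equiv.Perm (Fin n)))
    (f : Fin n → Fin n) (hidem : f ∘ f = f)
    (hrank : (univ.image f).card = n - 1)
    (hconst : ∃ h ∈ genMon G f, ∃ y, ∀ x, h x = y)
    (a b c d : Fin n) (hab : a ≠ b) (hcd : c ≠ d)
    (hne : ({a, b} : Finset (Fin n)) ≠ {c, d}) :
    ∃ h ∈ genMon G f,
      Xor' ((({a, b} : Finset (Fin n)).image h).card = 1)
           ((({c, d} : Finset (Fin n)).image h).card = 1) := by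
  obtain ⟨h, hh, y, hy⟩ := hconst
  have htame : ∀ g ∈ permSet G ∪ {f}, PairTame g := by
    rintro g (⟨σ, -, rfl⟩ | rfl)
    · exact pairTame_of_injective σ.injective
    · exact pairTame_of_subsingleton_moved
        (subsingleton_moved_of_idempotent hidem (by rw [hrank, Fintype.card_fin]; omega))
  exact exists_distinguishes_of_collapses htame hh (card_pair hab) (card_pair hcd) hne
    (collapses_pair_iff.mpr ((hy a).trans (hy b).symm))
end

section
/- Let G be a permutation group on [n] with n > 2. If for every transformation f : [n] → [n] of rank n−1 and all distinct 2-subsets {a,b}, {c,d} of [n] there exists g in the transformation monoid generated by G ∪ {f} with exactly one of g({a,b}), g({c,d}) a singleton, then for every 2-subset {a,b} of [n] there exists g ∈ G with g({a,b}) ≠ {a,b}. -/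
open Finset

/-!
Suppose `G` stabilises the pair `{a, b}` and let `f` send `b` to `a` and fix everything else,
a map of rank `n - 1`. Since `G` maps `{a, b}` into itself, the maps `h` with `h a = h b` absorb
multiplication by `G` on the right, so every element of the monoid generated by `G ∪ {f}` either
identifies `a` with `b` or is a permutation. Taking `c ∉ {a, b}` (here `n > 2` is used), neither
kind of map collapses exactly one of `{a, c}` and `{b, c}`.
-/

theorem card_image_update_id {α : Type*} [Fintype α] [DecidableEq α] {a b : α} (hab : a ≠ b) :
    (univ.image (Function.update id b a)).card = Fintype.card α - 1 := by
  have himage : univ.image (Function.update id b a) = univ.erase b := by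
    ext y
    simp only [mem_image, mem_univ, true_and, mem_erase, and_true]
    constructor
    · rintro ⟨x, rfl⟩
      by_cases hx : x = b
      · simp [hx, hab]
      · simp [hx]
    · intro hy
      exact ⟨y, by simp [hy]⟩
  rw [himage, card_erase_of_mem (mem_univ b), card_univ]

theorem apply_eq_of_mem_pair {α β : Type*} [DecidableEq α] {h : α → β} {a b x : α}
    (hab : h a = h b) (hx : x ∈ ({a, b} : Finset α)) : h x = h a := by
  rcases mem_insert.mp hx with rfl | hx
  · rfl
  · rw [mem_singleton.mp hx, hab]

theorem image_insert_eq_of_apply_eq {α β : Type*} [DecidableEq α] [DecidableEq β] {f : α → β}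
    {a b : α} (s : Finset α) (hab : f a = f b) : (insert a s).image f = (insert b s).image f := by
  rw [image_insert, image_insert, hab]

theorem apply_eq_apply_or_mem_permSet_of_mem_genMon {n : ℕ} {G : Subgroup (Equiv.Perm (Fin n))}
    {f : Fin n → Fin n} {a b : Fin n} (hG : ∀ g ∈ G, ({a, b} : Finset (Fin n)).image ⇑g = {a, b})
    (hf : f a = f b) : ∀ h ∈ genMon G f, h a = h b ∨ h ∈ permSet G := by
  intro h hh
  induction hh using Submonoid.closure_induction with
  | mem x hx =>
    rcases hx with hx | rfl
    exacts [Or.inr hx, Or.inl hf]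
  | one => exact Or.inr ⟨1, one_mem G, rfl⟩
  | mul x y _ _ hx hy =>
    show x (y a) = x (y b) ∨ x ∘ y ∈ permSet G
    rcases hy with hy | ⟨g, hg, rfl⟩
    · exact Or.inl (by rw [hy])
    rcases hx with hx | ⟨g', hg', rfl⟩
    · have hmem : ∀ x ∈ ({a, b} : Finset (Fin n)), g x ∈ ({a, b} : Finset (Fin n)) :=
        fun x hx ↦ hG g hg ▸ mem_image_of_mem g hx
      left
      rw [apply_eq_of_mem_pair hx (hmem a (by simp)), apply_eq_of_mem_pair hx (hmem b (by simp))]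
    · exact Or.inr ⟨g' * g, mul_mem hg' hg, rfl⟩

theorem exists_moving_2_set {n : ℕ} (hn : 2 < n) (G : Subgroup (Equiv.Perm (Fin n)))
    (H : ∀ f : Fin n → Fin n, (univ.image f).card = n - 1 →
      ∀ A B : Finset (Fin n), A.card = 2 → B.card = 2 → A ≠ B →
        ∃ g ∈ genMon G f, Xor' ((A.image g).card = 1) ((B.image g).card = 1)) :
    ∀ A : Finset (Fin n), A.card = 2 → ∃ g ∈ G, A.image ⇑g ≠ A := by
  intro A hA
  by_contra! hfix
  obtain ⟨a, b, hab, rfl⟩ := card_eq_two.mp hA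
  obtain ⟨c, -, hc⟩ := exists_mem_notMem_of_card_lt_card (s := {a, b}) (t := univ)
    (by simpa [hA] using hn)
  have hac : a ≠ c := by rintro rfl; simp at hc
  have hbc : b ≠ c := by rintro rfl; simp at hc
  have hne : ({a, c} : Finset (Fin n)) ≠ {b, c} := by
    intro h
    have : a ∈ ({b, c} : Finset (Fin n)) := h ▸ mem_insert_self a {c}
    simp_all
  obtain ⟨h, hh, hxor⟩ := H (Function.update id b a) (by simpa using card_image_update_id hab)
    {a, c} {b, c} (card_pair hac) (card_pair hbc) hne
  refine (xor_iff_not_iff _ _).mp hxor ?_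
  rcases apply_eq_apply_or_mem_permSet_of_mem_genMon hfix (by simp [hab]) h hh with
    hmerge | ⟨g, -, rfl⟩
  · rw [image_insert_eq_of_apply_eq _ hmerge]
  · rw [card_image_of_injective _ g.injective, card_image_of_injective _ g.injective,
      card_pair hac, card_pair hbc]
end

section
/- A permutation group G on [n] is primitive if and only if for every transformation f : [n] → [n] of rank n−1 and all distinct 2-element subsets {a,b}, {c,d} of [n], there exists g in the transformation monoid generated by G ∪ {f} such that exactly one of the sets g({a,b}) and g({c,d}) is a singleton. -/
/-!
Let `M` be the monoid generated by `G` and a map `f` of rank `n - 1`; such an `f` merges one pair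
`u ≠ v` and misses one point `m`.

If `G` is primitive (hence transitive once `n ≥ 3`), `M` contains a constant map (Rystsov): the
fibres of a map `h ∈ M` of minimal rank all have size `n / rank h` by double counting over `G`, and
comparing the fibres of `h ∘ g ∘ f` and `h ∘ g` shows that `h` identifies every `G`-translate of
the pair `{f u, m}`, so `h` is constant by primitivity. Since each letter lowers the rank by at most
one, `M` also contains a map of rank two, and such a map distinguishes two pairs `{a, c}`, `{b, c}`
sharing a point: otherwise, by pigeonhole on `g a, g b, g c`, it would identify every translate of
`{a, b}`. Two disjoint pairs that `M` cannot distinguish stay disjoint pairs along every word of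
`M`, because a collision of `f` across them would produce two indistinguishable pairs sharing a
point; a constant map then gives a contradiction.

Conversely, if `Δ` is a nontrivial block, `a, b ∈ Δ` and `y ∉ Δ`, the map sending `b` to `a` has
rank `n - 1`, and no element of `M` joins two points that do not lie in a common translate of `Δ`;
so `{a, y}` and `{b, y}` are never collapsed.
-/

open Finset

namespace Finset

lemma card_add_card_image_univ_le {α β : Type*} [Fintype α] [DecidableEq β] (f : α → β)
    (s : Finset α) :
    #s + #(univ.image f) ≤ #(s.image f) + Fintype.card α := by
  classical
  have hsplit : univ.image f = s.image f ∪ sᶜ.image f := by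
    rw [← image_union, union_compl]
  rw [hsplit]
  have := card_union_le (s.image f) (sᶜ.image f)
  have := card_image_le (s := sᶜ) (f := f)
  have := card_add_card_compl s
  omega

lemma card_image_univ_comp_le {α β γ : Type*} [Fintype α] [Fintype β] [DecidableEq γ] (h : β → γ)
    (φ : α → β) : #(univ.image (h ∘ φ)) ≤ #(univ.image h) := by
  classical
  simpa [← image_image] using card_le_card (image_subset_image
    (subset_univ (univ.image φ)) (f := h))

lemma image_univ_comp_eq_of_card_le {α β γ : Type*} [Fintype α] [Fintype β] [DecidableEq γ]
    (h : β → γ) (φ : α → β) (hle : #(univ.image h) ≤ #(univ.image (h ∘ φ))) :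
    univ.image (h ∘ φ) = univ.image h := by
  classical
  refine eq_of_subset_of_card_le ?_ hle
  rw [← image_image]
  exact image_subset_image (subset_univ _)

lemma card_image_le_one_of_forall_apply_eq {α β : Type*} [DecidableEq β] {c : α → β}
    (hc : ∀ x y, c x = c y) (s : Finset α) : #(s.image c) ≤ 1 :=
  card_le_one.mpr (by
    simp only [mem_image]
    rintro _ ⟨x, -, rfl⟩ _ ⟨y, -, rfl⟩
    exact hc x y)

lemma card_image_pair_eq_one_iff {α β : Type*} [DecidableEq α] [DecidableEq β] (w : α → β)
    (x y : α) : #(({x, y} : Finset α).image w) = 1 ↔ w x = w y := by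
  rw [image_insert, image_singleton, card_eq_one]
  constructor
  · rintro ⟨c, hc⟩
    have hx : w x = c := by simpa using (Finset.ext_iff.mp hc (w x)).mp (by simp)
    have hy : w y = c := by simpa using (Finset.ext_iff.mp hc (w y)).mp (by simp)
    rw [hx, hy]
  · intro h
    exact ⟨w y, by simp [h]⟩

lemma exists_eq_pair_of_card_eq_two {α : Type*} [DecidableEq α] {A : Finset α} (hA : #A = 2)
    {c : α} (hc : c ∈ A) : ∃ a, a ≠ c ∧ A = {a, c} := by
  obtain ⟨a, ha⟩ := card_eq_one.mp (by rw [card_erase_of_mem hc, hA] :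
    #(A.erase c) = 1)
  refine ⟨a, fun hac => ?_, ?_⟩
  · simpa [hac] using (Finset.ext_iff.mp ha a).mpr (mem_singleton_self a)
  · rw [← insert_erase hc, ha, pair_comm]

lemma card_image_univ_update_id {n : ℕ} {a b : Fin n} (hab : a ≠ b) :
    #(univ.image (Function.update id b a)) = n - 1 := by
  have : univ.image (Function.update id b a) = univ.erase b := by
    ext z
    simp only [mem_image, mem_univ, true_and, mem_erase, and_true]
    refine ⟨?_, fun hz => ⟨z, by simp [hz]⟩⟩
    rintro ⟨x, rfl⟩
    by_cases hx : x = b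
    · simpa [hx] using hab
    · simp [hx]
  rw [this, card_erase_of_mem (mem_univ b), card_univ, Fintype.card_fin]

end Finset

namespace IsPrimitive'

variable {n : ℕ} {G : Subgroup (Equiv.Perm (Fin n))}

/-- The classes of a `G`-invariant equivalence relation are blocks. -/
lemma rel_of_invariant (hG : IsPrimitive' G) {r : Fin n → Fin n → Prop} (hr : Equivalence r)
    (hinv : ∀ g ∈ G, ∀ x y, r x y → r (g x) (g y)) {a b : Fin n} (hab : a ≠ b) (hrab : r a b)
    (x y : Fin n) : r x y := by
  classical
  set Δ : Finset (Fin n) := {z | r a z}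
  have himage : ∀ g ∈ G, Δ.image ⇑g = ({z | r (g a) z} : Finset (Fin n)) := by
    intro g hg
    ext z
    simp only [Δ, mem_image, mem_filter, mem_univ, true_and]
    refine ⟨fun ⟨t, ht, htz⟩ => htz ▸ hinv g hg a t ht, fun hz => ⟨g⁻¹ z, ?_, by simp⟩⟩
    simpa using hinv g⁻¹ (inv_mem hg) _ _ hz
  have hblock : ∀ g ∈ G, Δ.image ⇑g = Δ ∨ Disjoint (Δ.image ⇑g) Δ := by
    intro g hg
    rw [himage g hg]
    refine or_iff_not_imp_right.mpr fun hnd => ?_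
    obtain ⟨z, hz₁, hz₂⟩ := not_disjoint_iff.mp hnd
    simp only [Δ, mem_filter, mem_univ, true_and] at hz₁ hz₂ ⊢
    have hga : r a (g a) := hr.trans hz₂ (hr.symm hz₁)
    ext t
    simp only [mem_filter, mem_univ, true_and]
    exact ⟨hr.trans hga, hr.trans (hr.symm hga)⟩
  have hcard : 1 < #Δ := one_lt_card.mpr
    ⟨a, by simpa [Δ] using hr.refl a, b, by simpa [Δ] using hrab, hab⟩
  have hΔ : Δ = univ := by
    by_contra hne
    have := card_lt_card (ssubset_univ_iff.mpr hne)
    exact hG ⟨Δ, hcard, by simpa using this, hblock⟩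
  have hmem : ∀ z, r a z := fun z => by simpa [Δ] using eq_univ_iff_forall.mp hΔ z
  exact hr.trans (hr.symm (hmem x)) (hmem y)

lemma apply_eq_of_forall_apply_eq {β : Type*} (hG : IsPrimitive' G) {a b : Fin n} (hab : a ≠ b)
    {φ : Fin n → β} (hφ : ∀ g ∈ G, φ (g a) = φ (g b)) (x y : Fin n) : φ x = φ y := by
  let r : Fin n → Fin n → Prop :=
    fun x y => ∀ ψ : Fin n → β, (∀ g ∈ G, ψ (g a) = ψ (g b)) → ψ x = ψ y
  have hr : Equivalence r :=
    ⟨fun _ _ _ => rfl, fun h ψ hψ => (h ψ hψ).symm, fun h₁ h₂ ψ hψ => (h₁ ψ hψ).trans (h₂ ψ hψ)⟩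
  have hinv : ∀ g ∈ G, ∀ x y, r x y → r (g x) (g y) := fun g hg x y h ψ hψ =>
    h (ψ ∘ g) fun g' hg' => hψ (g * g') (mul_mem hg hg')
  exact rel_of_invariant hG hr hinv hab (fun ψ hψ => by simpa using hψ 1 (one_mem G)) x y φ hφ

lemma exists_apply_eq (hG : IsPrimitive' G) (hn : 3 ≤ n) (x y : Fin n) : ∃ g ∈ G, g x = y := by
  let r : Fin n → Fin n → Prop := fun x y => ∃ g ∈ G, g x = y
  have hr : Equivalence r :=
    ⟨fun x => ⟨1, one_mem G, rfl⟩, fun ⟨g, hg, h⟩ => ⟨g⁻¹, inv_mem hg, by simp [← h]⟩,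
      fun ⟨g, hg, h⟩ ⟨g', hg', h'⟩ => ⟨g' * g, mul_mem hg' hg, by simp [h, h']⟩⟩
  have hinv : ∀ g ∈ G, ∀ x y, r x y → r (g x) (g y) := fun g hg x y ⟨g', hg', h⟩ =>
    ⟨g * g' * g⁻¹, mul_mem (mul_mem hg hg') (inv_mem hg), by simp [h]⟩
  by_cases htriv : ∀ g ∈ G, ∀ z, g z = z
  · exfalso
    have h01 : (⟨0, by omega⟩ : Fin n) ≠ ⟨1, by omega⟩ := by simp
    refine hG ⟨{⟨0, by omega⟩, ⟨1, by omega⟩}, ?_, ?_, fun g hg => Or.inl ?_⟩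
    · rw [card_pair h01]; omega
    · rw [card_pair h01]; omega
    · simp [htriv g hg]
  · push Not at htriv
    obtain ⟨g, hg, z, hz⟩ := htriv
    exact rel_of_invariant hG hr hinv hz.symm ⟨g, hg, rfl⟩ x y

end IsPrimitive'

section Counting

variable {n : ℕ} {G : Subgroup (Equiv.Perm (Fin n))} [DecidablePred (· ∈ G)]

lemma card_filter_apply_eq_mul (htrans : ∀ x y : Fin n, ∃ g ∈ G, g x = y) (y x : Fin n) :
    #{g | g ∈ G ∧ g y = x} * n = #{g | g ∈ G} := by
  have hconst : ∀ x', #{g | g ∈ G ∧ g y = x'} = #{g | g ∈ G ∧ g y = x} := fun x' => by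
    obtain ⟨g₀, hg₀, rfl⟩ := htrans x x'
    refine card_nbij' (g₀⁻¹ * ·) (g₀ * ·) ?_ ?_ (fun g _ => by simp) (fun g _ => by simp)
    · intro g hg
      simp only [coe_filter, mem_univ, true_and, Set.mem_ofPred_eq] at hg ⊢
      exact ⟨mul_mem (inv_mem hg₀) hg.1, by simp [Equiv.Perm.mul_apply, hg.2]⟩
    · intro g hg
      simp only [coe_filter, mem_univ, true_and, Set.mem_ofPred_eq] at hg ⊢
      exact ⟨mul_mem hg₀ hg.1, by simp [hg.2]⟩
  rw [card_eq_sum_card_fiberwise (s := {g | g ∈ G}) (f := (· y)) (t := univ)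
    fun _ _ => mem_univ _]
  simp only [filter_filter, hconst, sum_const, card_univ, Fintype.card_fin,
    smul_eq_mul, mul_comm]

lemma card_filter_apply_mem_mul (htrans : ∀ x y : Fin n, ∃ g ∈ G, g x = y) (y : Fin n)
    (K : Finset (Fin n)) : #{g | g ∈ G ∧ g y ∈ K} * n = #K * #{g | g ∈ G} := by
  rw [card_eq_sum_card_fiberwise (s := {g | g ∈ G ∧ g y ∈ K}) (f := (· y)) (t := K)
    (by intro g hg; simp_all), sum_mul, ← smul_eq_mul, ← sum_const]
  refine sum_congr rfl fun x hx => ?_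
  rw [← card_filter_apply_eq_mul htrans y x, filter_filter]
  congr 2
  ext g
  simp only [mem_filter, mem_univ, true_and]
  constructor
  · rintro ⟨⟨hg, -⟩, rfl⟩; exact ⟨hg, rfl⟩
  · rintro ⟨hg, rfl⟩; exact ⟨⟨hg, hx⟩, rfl⟩

end Counting

/-- Double counting the pairs `(g, y) ∈ G × S` with `g y ∈ K`. -/
lemma card_mul_card_eq_of_forall_card_filter_eq_one {n : ℕ} {G : Subgroup (Equiv.Perm (Fin n))}
    (htrans : ∀ x y : Fin n, ∃ g ∈ G, g x = y) {S K : Finset (Fin n)}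
    (h : ∀ g ∈ G, #{y ∈ S | g y ∈ K} = 1) : #K * #S = n := by
  classical
  have hpos : 0 < #{g | g ∈ G} := card_pos.mpr ⟨1, by simp [one_mem]⟩
  have hcount : ∑ g ∈ ({g | g ∈ G} : Finset _), #{y ∈ S | g y ∈ K} =
      ∑ y ∈ S, #{g | g ∈ G ∧ g y ∈ K} := by
    simpa [bipartiteAbove, bipartiteBelow, filter_filter] using
      sum_card_bipartiteAbove_eq_sum_card_bipartiteBelow (s := {g | g ∈ G}) (t := S)
        (r := fun g y => g y ∈ K)
  refine Nat.eq_of_mul_eq_mul_right hpos ?_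
  calc #K * #S * #{g | g ∈ G}
      = ∑ y ∈ S, #{g | g ∈ G ∧ g y ∈ K} * n := by
        simp [card_filter_apply_mem_mul htrans, mul_comm, mul_assoc]
    _ = #{g | g ∈ G} * n := by
        rw [← sum_mul, ← hcount, sum_congr rfl fun g hg => h g (by simpa using hg)]
        simp
    _ = n * #{g | g ∈ G} := mul_comm _ _

namespace genMon

variable {n : ℕ} {G : Subgroup (Equiv.Perm (Fin n))} {f : Fin n → Fin n}

lemma perm_mem {g : Equiv.Perm (Fin n)} (hg : g ∈ G) :
    (⇑g : Function.End (Fin n)) ∈ genMon G f :=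
  Submonoid.subset_closure (Or.inl ⟨g, hg, rfl⟩)

lemma self_mem : (f : Function.End (Fin n)) ∈ genMon G f :=
  Submonoid.subset_closure (Or.inr rfl)

@[elab_as_elim]
lemma induction_left {motive : (w : Fin n → Fin n) → w ∈ genMon G f → Prop}
    (one : motive id (one_mem _))
    (perm_mul : ∀ g (hg : g ∈ G) w hw, motive w hw → motive (⇑g ∘ w) (mul_mem (perm_mem hg) hw))
    (self_mul : ∀ w hw, motive w hw → motive (f ∘ w) (mul_mem self_mem hw))
    {w : Fin n → Fin n} (hw : w ∈ genMon G f) : motive w hw := by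
  induction hw using Submonoid.closure_induction_left with
  | one => exact one
  | mul_left x hx y hy ih =>
    rcases hx with ⟨g, hg, rfl⟩ | rfl
    · exact perm_mul g hg y hy ih
    · exact self_mul y hy ih

/-- Left multiplication by `f` lowers the rank by at most one, so the ranks of a word in `f` and
`G` pass through every value between the rank of the word and `n`. -/
lemma exists_card_image_eq (hf : #(univ.image f) = n - 1) {w : Fin n → Fin n}
    (hw : w ∈ genMon G f) {k : ℕ} (hwk : #(univ.image w) ≤ k) (hkn : k ≤ n) :
    ∃ w' : Fin n → Fin n, w' ∈ genMon G f ∧ #(univ.image w') = k := by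
  induction hw using genMon.induction_left generalizing k with
  | one => exact ⟨id, one_mem _, by simp at hwk ⊢; omega⟩
  | perm_mul g _ w _ ih =>
    refine ih ?_ hkn
    rwa [← image_image, card_image_of_injective _ g.injective] at hwk
  | self_mul w hw ih =>
    by_cases hle : #(univ.image w) ≤ k
    · exact ih hle hkn
    refine ⟨f ∘ w, mul_mem self_mem hw, le_antisymm hwk ?_⟩
    have := card_add_card_image_univ_le f (univ.image w)
    rw [Fintype.card_fin, hf, image_image] at this
    omega

end genMon

structure CorankOneData {n : ℕ} (f : Fin n → Fin n) where
  u : Fin n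
  v : Fin n
  missing : Fin n
  apply_u : f u = f v
  eq_or_of_apply_eq : ∀ x y, f x = f y → x = y ∨ (x = u ∧ y = v) ∨ (x = v ∧ y = u)
  apply_ne_missing : ∀ x, f x ≠ missing
  exists_apply_eq : ∀ y, y ≠ missing → ∃ x, f x = y

namespace CorankOneData

variable {n : ℕ} {f : Fin n → Fin n}

lemma nonempty_of_card_image (hf : #(univ.image f) = n - 1) (hn : 0 < n) :
    Nonempty (CorankOneData f) := by
  classical
  have hlt : #(univ.image f) < #(univ : Finset (Fin n)) := by simp [hf]; omega
  obtain ⟨u, v, huv, hfuv⟩ : ∃ u v, u ≠ v ∧ f u = f v := by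
    by_contra! h
    exact hlt.ne (card_image_of_injective _ fun x y hxy => by_contra fun hne => h x y hne hxy)
  obtain ⟨m, hm⟩ : ∃ m, univ \ univ.image f = {m} := card_eq_one.mp (by
    rw [card_sdiff_of_subset (subset_univ _), card_univ, Fintype.card_fin, hf]
    omega)
  have hmem : ∀ y, y ∈ univ.image f ↔ y ≠ m := fun y => by
    simpa using (Finset.ext_iff.mp hm y).not
  have hinj : Set.InjOn f (univ.erase v : Finset (Fin n)) := by
    rw [← card_image_iff, card_erase_of_mem (mem_univ v), card_univ, Fintype.card_fin, ← hf]
    congr 1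
    ext y
    simp only [mem_image, mem_erase, mem_univ, and_true, true_and]
    refine ⟨fun ⟨x, _, hx⟩ => ⟨x, hx⟩, fun ⟨x, hx⟩ => ?_⟩
    by_cases hxv : x = v
    · exact ⟨u, hxv ▸ huv, by rw [hfuv, ← hxv, hx]⟩
    · exact ⟨x, hxv, hx⟩
  refine ⟨⟨u, v, m, hfuv, fun x y hxy => ?_, fun x hx => (hmem (f x)).mp (by simp) hx,
    fun y hy => by simpa using (hmem y).mpr hy⟩⟩
  by_cases hx : x = v <;> by_cases hy : y = v
  · exact Or.inl (hx.trans hy.symm)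
  · exact Or.inr (Or.inr ⟨hx, hinj (by simpa using hy) (by simpa using huv) (hxy.symm.trans
      (hx ▸ hfuv.symm))⟩)
  · exact Or.inr (Or.inl ⟨hinj (by simpa using hx) (by simpa using huv) (hxy.trans
      (hy ▸ hfuv.symm)), hy⟩)
  · exact Or.inl (hinj (by simpa using hx) (by simpa using hy) hxy)

lemma card_preimage_add_one (hf : CorankOneData f) {D : Finset (Fin n)} (hm : hf.missing ∈ D)
    (hu : f hf.u ∉ D) : #{z | f z ∈ D} + 1 = #D := by
  have himage : ({z | f z ∈ D} : Finset (Fin n)).image f = D.erase hf.missing := by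
    ext y
    simp only [mem_image, mem_filter, mem_univ, true_and, mem_erase]
    refine ⟨fun ⟨x, hx, hxy⟩ => hxy ▸ ⟨hf.apply_ne_missing x, hx⟩, fun ⟨hy, hyD⟩ => ?_⟩
    obtain ⟨x, rfl⟩ := hf.exists_apply_eq y hy
    exact ⟨x, hyD, rfl⟩
  have hinj : Set.InjOn f ({z | f z ∈ D} : Finset (Fin n)) := by
    intro x hx y _ hxy
    simp only [coe_filter, mem_univ, true_and, Set.mem_ofPred_eq] at hx
    rcases hf.eq_or_of_apply_eq x y hxy with h | ⟨rfl, -⟩ | ⟨rfl, -⟩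
    · exact h
    · exact absurd hx hu
    · exact absurd (hf.apply_u ▸ hx) hu
  rw [← card_image_of_injOn hinj, himage, card_erase_add_one hm]

lemma eq_or_eq_of_apply_eq (hf : CorankOneData f)
    {x y p q : Fin n} (hxy : x ≠ y) (hfxy : f x = f y) (hpq : p ≠ q) (hfpq : f p = f q) :
    p = x ∨ p = y := by
  rcases hf.eq_or_of_apply_eq x y hfxy with h | ⟨rfl, rfl⟩ | ⟨rfl, rfl⟩ <;>
    rcases hf.eq_or_of_apply_eq p q hfpq with h' | ⟨rfl, rfl⟩ | ⟨rfl, rfl⟩ <;> simp_all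

end CorankOneData

section Synchronizing

variable {n : ℕ} {G : Subgroup (Equiv.Perm (Fin n))} {f : Fin n → Fin n}

/-- For every `g ∈ G`, minimality makes `t ∘ g` injective on `univ.image h` with the same image as
`t`, so each fibre of `t` contains `g y` for exactly one `y ∈ univ.image h`. -/
lemma card_fiber_mul_card_image_eq (htrans : ∀ x y : Fin n, ∃ g ∈ G, g x = y)
    {h t : Fin n → Fin n} (hh : h ∈ genMon G f)
    (hmin : ∀ w ∈ genMon G f, #(univ.image h) ≤ #(univ.image w)) (ht : t ∈ genMon G f)
    (hth : #(univ.image t) ≤ #(univ.image h)) {s : Fin n} (hs : s ∈ univ.image t) :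
    #{z | t z = s} * #(univ.image h) = n := by
  classical
  refine card_mul_card_eq_of_forall_card_filter_eq_one htrans fun g hg => ?_
  have hmem : t ∘ g ∘ h ∈ genMon G f := mul_mem ht (mul_mem (genMon.perm_mem hg) hh)
  have hrank : #(univ.image h) ≤ #((univ.image h).image (t ∘ g)) := by
    rw [image_image]
    exact hmin _ hmem
  have hinj : Set.InjOn (t ∘ g) (univ.image h : Finset (Fin n)) :=
    card_image_iff.mp (card_image_le.antisymm hrank)
  have himage : (univ.image h).image (t ∘ g) = univ.image t := by
    rw [image_image]
    exact image_univ_comp_eq_of_card_le t (g ∘ h) (hth.trans (hmin _ hmem))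
  obtain ⟨y₀, hy₀, hy₀s⟩ := mem_image.mp (himage ▸ hs)
  refine card_eq_one.mpr ⟨y₀, ext fun y => ?_⟩
  simp only [mem_filter, mem_singleton, mem_univ, true_and,
    Function.comp_apply] at hy₀s ⊢
  exact ⟨fun ⟨hy, hys⟩ => hinj hy hy₀ (hys.trans hy₀s.symm), fun hy => hy ▸ ⟨hy₀, hy₀s⟩⟩

/-- Rystsov: a map `h` of minimal rank has `h (g (f u)) = h (g missing)` for every `g ∈ G`, since
otherwise the fibre of `h ∘ g ∘ f` over `h (g missing)` would be one point smaller than that of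
`h ∘ g`; by primitivity `h` is then constant. -/
theorem exists_const_mem_genMon (hG : IsPrimitive' G) (hn : 3 ≤ n) (hf : CorankOneData f) :
    ∃ c : Fin n → Fin n, c ∈ genMon G f ∧ ∀ x y, c x = c y := by
  classical
  obtain ⟨h, hh, hmin⟩ := Set.exists_min_image {w : Fin n → Fin n | w ∈ genMon G f}
    (fun w => #(univ.image w)) (Set.toFinite _) ⟨f, genMon.self_mem⟩
  refine ⟨h, hh, hG.apply_eq_of_forall_apply_eq (hf.apply_ne_missing hf.u) fun g hg => ?_⟩
  by_contra hne
  have htrans := hG.exists_apply_eq hn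
  have hhg : h ∘ g ∈ genMon G f := mul_mem hh (genMon.perm_mem hg)
  have hhgf : h ∘ g ∘ f ∈ genMon G f := mul_mem hh (mul_mem (genMon.perm_mem hg) genMon.self_mem)
  have hD := card_fiber_mul_card_image_eq htrans hh hmin hhg (card_image_univ_comp_le h g)
    (s := h (g hf.missing)) (mem_image_of_mem _ (mem_univ hf.missing))
  have himage : univ.image (h ∘ g ∘ f) = univ.image h :=
    image_univ_comp_eq_of_card_le h (g ∘ f) (hmin _ hhgf)
  have hK := card_fiber_mul_card_image_eq htrans hh hmin hhgf (t := h ∘ g ∘ f)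
    (card_image_univ_comp_le h (g ∘ f)) (s := h (g hf.missing))
    (himage ▸ mem_image_of_mem h (mem_univ _))
  have hKD : #{z | (h ∘ g ∘ f) z = h (g hf.missing)} + 1 =
      #{z | (h ∘ g) z = h (g hf.missing)} := by
    convert hf.card_preimage_add_one (D := {z | (h ∘ g) z = h (g hf.missing)}) (by simp)
      (by simpa using hne) using 3
    simp
  have hpos : 0 < #(univ.image h) := Nat.pos_of_ne_zero fun h0 => by simp [h0] at hD; omega
  have := Nat.eq_of_mul_eq_mul_right hpos (hK.trans hD.symm)
  omega

lemma exists_card_image_eq_two (hG : IsPrimitive' G) (hn : 3 ≤ n) (hf : CorankOneData f)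
    (hrank : #(univ.image f) = n - 1) :
    ∃ w : Fin n → Fin n, w ∈ genMon G f ∧ #(univ.image w) = 2 := by
  obtain ⟨c, hc, hconst⟩ := exists_const_mem_genMon hG hn hf
  exact genMon.exists_card_image_eq hrank hc
    ((card_image_le_one_of_forall_apply_eq hconst univ).trans (by norm_num)) (by omega)

end Synchronizing

def Indistinguishable {n : ℕ} (G : Subgroup (Equiv.Perm (Fin n))) (f : Fin n → Fin n)
    (A B : Finset (Fin n)) : Prop :=
  ∀ w : Fin n → Fin n, w ∈ genMon G f → (#(A.image w) = 1 ↔ #(B.image w) = 1)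

namespace Indistinguishable

variable {n : ℕ} {G : Subgroup (Equiv.Perm (Fin n))} {f : Fin n → Fin n} {A B : Finset (Fin n)}

lemma image (h : Indistinguishable G f A B) {w : Fin n → Fin n} (hw : w ∈ genMon G f) :
    Indistinguishable G f (A.image w) (B.image w) := fun w' hw' => by
  simpa only [image_image] using h (w' ∘ w) (mul_mem hw' hw)

/-- A rank-two map `w` identifies two of the three points `g a, g b, g c` for every `g ∈ G`; if
`genMon G f` cannot tell `{a, c}` from `{b, c}`, then `w ∘ g` identifies `a` and `b`. -/
lemma false_of_not_disjoint (hG : IsPrimitive' G) {w : Fin n → Fin n} (hw : w ∈ genMon G f)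
    (hw2 : #(univ.image w) = 2) (hA : #A = 2) (hB : #B = 2) (hAB : A ≠ B)
    (hnd : ¬ Disjoint A B) (h : Indistinguishable G f A B) : False := by
  obtain ⟨c, hcA, hcB⟩ := not_disjoint_iff.mp hnd
  obtain ⟨a, -, rfl⟩ := exists_eq_pair_of_card_eq_two hA hcA
  obtain ⟨b, -, rfl⟩ := exists_eq_pair_of_card_eq_two hB hcB
  have hab : a ≠ b := fun hab => hAB (hab ▸ rfl)
  have hcollapse : ∀ g ∈ G, w (g a) = w (g b) := by
    intro g hg
    have hiff : w (g a) = w (g c) ↔ w (g b) = w (g c) := by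
      simpa only [image_image, card_image_pair_eq_one_iff,
        Function.comp_apply] using h (w ∘ g) (mul_mem hw (genMon.perm_mem hg))
    by_contra hne
    have h3 : #({w (g a), w (g b), w (g c)} : Finset (Fin n)) = 3 :=
      card_eq_three.mpr ⟨_, _, _, hne, fun h' => hne (h'.trans (hiff.mp h').symm),
        fun h' => hne ((hiff.mpr h').trans h'.symm), rfl⟩
    have := card_le_card (s := {w (g a), w (g b), w (g c)}) (t := univ.image w)
      (by
        intro z
        simp only [mem_insert, mem_singleton]
        rintro (rfl | rfl | rfl) <;> simp)
    omega
  have hconst := hG.apply_eq_of_forall_apply_eq hab hcollapse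
  have := card_image_le_one_of_forall_apply_eq hconst univ
  omega

/-- A collision of `f` between `A` and `B` would turn them into two distinct pairs sharing a
point. -/
lemma image_self_of_disjoint (hG : IsPrimitive' G) (hf : CorankOneData f) {w : Fin n → Fin n}
    (hw : w ∈ genMon G f) (hw2 : #(univ.image w) = 2) (hA : #A = 2) (hB : #B = 2)
    (hAB : Disjoint A B) (h : Indistinguishable G f A B) :
    #(A.image f) = 2 ∧ #(B.image f) = 2 ∧ Disjoint (A.image f) (B.image f) := by
  have hA1 : #(A.image f) ≠ 1 := by
    intro h1
    obtain ⟨a₁, a₂, ha, rfl⟩ := card_eq_two.mp hA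
    obtain ⟨b₁, b₂, hb, rfl⟩ := card_eq_two.mp hB
    rw [card_image_pair_eq_one_iff] at h1
    have hb₁ := hf.eq_or_eq_of_apply_eq ha h1 hb
      ((card_image_pair_eq_one_iff f b₁ b₂).mp ((h f genMon.self_mem).mp
        ((card_image_pair_eq_one_iff f a₁ a₂).mpr h1)))
    rcases hb₁ with rfl | rfl <;> simp at hAB
  have hB1 : #(B.image f) ≠ 1 := fun h1 => hA1 ((h f genMon.self_mem).mpr h1)
  have hcard : ∀ C : Finset (Fin n), #C = 2 → #(C.image f) ≠ 1 → #(C.image f) = 2 :=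
    fun C hC hC1 => by
      have := card_image_le (s := C) (f := f)
      have : 0 < #(C.image f) := card_pos.mpr ((card_pos.mp (by omega)).image f)
      omega
  refine ⟨hcard A hA hA1, hcard B hB hB1, disjoint_left.mpr ?_⟩
  rintro _ hxA' hxB'
  obtain ⟨x, hxA, rfl⟩ := mem_image.mp hxA'
  obtain ⟨y, hyB, hxy⟩ := mem_image.mp hxB'
  have hxy' : x ≠ y := fun h' => disjoint_left.mp hAB hxA (h' ▸ hyB)
  obtain ⟨x', hx', rfl⟩ := exists_eq_pair_of_card_eq_two hA hxA
  obtain ⟨y', -, rfl⟩ := exists_eq_pair_of_card_eq_two hB hyB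
  have hx'y' : x' ≠ y' := fun h' =>
    disjoint_left.mp hAB (mem_insert_self x' {x}) (by simp [h'])
  have hx'y : x' ≠ y := fun h' =>
    disjoint_left.mp hAB (mem_insert_self x' {x}) (by simp [h'])
  have hfx' : f x' ∉ ({y', y} : Finset (Fin n)).image f := by
    simp only [image_insert, image_singleton, mem_insert,
      mem_singleton, hxy, not_or]
    exact ⟨fun he => (hf.eq_or_eq_of_apply_eq hxy' hxy.symm hx'y' he).elim hx' hx'y,
      fun he => (hf.eq_or_eq_of_apply_eq hxy' hxy.symm hx' he).elim hx' hx'y⟩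
  refine false_of_not_disjoint hG hw hw2 (hcard _ hA hA1) (hcard _ hB hB1)
    (fun he => hfx' (he ▸ by simp)) (not_disjoint_iff.mpr ⟨f x, by simp, by simp [hxy]⟩)
    (h.image genMon.self_mem)

lemma image_of_disjoint (hG : IsPrimitive' G) (hf : CorankOneData f) {w₂ : Fin n → Fin n}
    (hw₂ : w₂ ∈ genMon G f) (hw₂2 : #(univ.image w₂) = 2) (hA : #A = 2) (hB : #B = 2)
    (hAB : Disjoint A B) (h : Indistinguishable G f A B) {w : Fin n → Fin n}
    (hw : w ∈ genMon G f) :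
    #(A.image w) = 2 ∧ #(B.image w) = 2 ∧ Disjoint (A.image w) (B.image w) := by
  induction hw using genMon.induction_left with
  | one => simpa using ⟨hA, hB, hAB⟩
  | perm_mul g _ w _ ih =>
    simpa only [← image_image, card_image_of_injective _ g.injective,
      disjoint_image g.injective] using ih
  | self_mul w hw ih =>
    simpa only [← image_image] using
      image_self_of_disjoint hG hf hw₂ hw₂2 ih.1 ih.2.1 ih.2.2 (h.image hw)

end Indistinguishable

theorem not_indistinguishable_of_isPrimitive' {n : ℕ} {G : Subgroup (Equiv.Perm (Fin n))}
    (hG : IsPrimitive' G) (hn : 3 ≤ n) {f : Fin n → Fin n} (hrank : #(univ.image f) = n - 1)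
    {A B : Finset (Fin n)} (hA : #A = 2) (hB : #B = 2) (hAB : A ≠ B) :
    ¬ Indistinguishable G f A B := by
  intro h
  obtain ⟨hf⟩ := CorankOneData.nonempty_of_card_image hrank (by omega)
  obtain ⟨w₂, hw₂, hw₂2⟩ := exists_card_image_eq_two hG hn hf hrank
  by_cases hd : Disjoint A B
  · obtain ⟨c, hc, hconst⟩ := exists_const_mem_genMon hG hn hf
    have hcA := (h.image_of_disjoint hG hf hw₂ hw₂2 hA hB hd hc).1
    have := card_image_le_one_of_forall_apply_eq hconst A
    omega
  · exact h.false_of_not_disjoint hG hw₂ hw₂2 hA hB hAB hd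

lemma image_eq_of_mem_image_of_mem {n : ℕ} {G : Subgroup (Equiv.Perm (Fin n))} {Δ : Finset (Fin n)}
    (hblock : ∀ g ∈ G, Δ.image ⇑g = Δ ∨ Disjoint (Δ.image ⇑g) Δ) {g : Equiv.Perm (Fin n)}
    (hg : g ∈ G) {x : Fin n} (hxg : x ∈ Δ.image ⇑g) (hx : x ∈ Δ) : Δ.image ⇑g = Δ :=
  (hblock g hg).resolve_right (not_disjoint_iff.mpr ⟨x, hxg, hx⟩)

def SameBlock {n : ℕ} (G : Subgroup (Equiv.Perm (Fin n))) (Δ : Finset (Fin n)) (x y : Fin n) :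
    Prop :=
  x = y ∨ ∃ g ∈ G, x ∈ Δ.image g ∧ y ∈ Δ.image g

namespace SameBlock

variable {n : ℕ} {G : Subgroup (Equiv.Perm (Fin n))} {Δ : Finset (Fin n)} {x y : Fin n}

lemma of_perm_apply {g : Equiv.Perm (Fin n)} (hg : g ∈ G) (h : SameBlock G Δ (g x) (g y)) :
    SameBlock G Δ x y := by
  have hmem : ∀ g' : Equiv.Perm (Fin n), ∀ z, g z ∈ Δ.image g' → z ∈ Δ.image ⇑(g⁻¹ * g') := by
    intro g' z hz
    obtain ⟨t, ht, htz⟩ := mem_image.mp hz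
    exact mem_image.mpr ⟨t, ht, by simp [htz]⟩
  exact h.imp (fun h => g.injective h) fun ⟨g', hg', hx, hy⟩ =>
    ⟨g⁻¹ * g', mul_mem (inv_mem hg) hg', hmem g' x hx, hmem g' y hy⟩

lemma of_update_apply
    (hblock : ∀ g ∈ G, Δ.image ⇑g = Δ ∨ Disjoint (Δ.image ⇑g) Δ) {a b : Fin n} (ha : a ∈ Δ)
    (hb : b ∈ Δ) (h : SameBlock G Δ (Function.update id b a x) (Function.update id b a y)) :
    SameBlock G Δ x y := by
  have hmem : ∀ g ∈ G, ∀ z, Function.update id b a z ∈ Δ.image g → z ∈ Δ.image g := by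
    intro g hg z hz
    by_cases hzb : z = b
    · subst hzb
      rw [Function.update_self] at hz
      rwa [image_eq_of_mem_image_of_mem hblock hg hz ha]
    · rwa [Function.update_of_ne hzb, id] at hz
  have hΔ : ∀ z ∈ Δ, z ∈ Δ.image ⇑(1 : Equiv.Perm (Fin n)) := by simp
  rcases h with h | ⟨g, hg, hx, hy⟩
  · by_cases hxb : x = b <;> by_cases hyb : y = b
    · exact Or.inl (hxb.trans hyb.symm)
    · rw [hxb, Function.update_self, Function.update_of_ne hyb, id] at h
      exact Or.inr ⟨1, one_mem G, hΔ x (hxb ▸ hb), hΔ y (h ▸ ha)⟩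
    · rw [hyb, Function.update_self, Function.update_of_ne hxb, id] at h
      exact Or.inr ⟨1, one_mem G, hΔ x (h ▸ ha), hΔ y (hyb ▸ hb)⟩
    · rw [Function.update_of_ne hxb, Function.update_of_ne hyb] at h
      exact Or.inl h
  · exact Or.inr ⟨g, hg, hmem g hg x hx, hmem g hg y hy⟩

lemma of_apply
    (hblock : ∀ g ∈ G, Δ.image ⇑g = Δ ∨ Disjoint (Δ.image ⇑g) Δ) {a b : Fin n} (ha : a ∈ Δ)
    (hb : b ∈ Δ) {w : Fin n → Fin n} (hw : w ∈ genMon G (Function.update id b a))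
    (h : SameBlock G Δ (w x) (w y)) : SameBlock G Δ x y := by
  induction hw using genMon.induction_left generalizing x y with
  | one => exact h
  | perm_mul g hg w _ ih => exact ih (of_perm_apply hg h)
  | self_mul w _ ih => exact ih (of_update_apply hblock ha hb h)

end SameBlock

lemma exists_indistinguishable_of_block {n : ℕ} {G : Subgroup (Equiv.Perm (Fin n))}
    {Δ : Finset (Fin n)} (h1 : 1 < #Δ) (h2 : #Δ < n)
    (hblock : ∀ g ∈ G, Δ.image ⇑g = Δ ∨ Disjoint (Δ.image ⇑g) Δ) :
    ∃ f : Fin n → Fin n, #(univ.image f) = n - 1 ∧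
      ∃ A B : Finset (Fin n), #A = 2 ∧ #B = 2 ∧ A ≠ B ∧ Indistinguishable G f A B := by
  obtain ⟨a, ha, b, hb, hab⟩ := one_lt_card.mp h1
  obtain ⟨y, hy⟩ : ∃ y, y ∉ Δ := by
    by_contra! hall
    simp [eq_univ_iff_forall.mpr hall] at h2
  have hsep : ∀ z ∈ Δ, ∀ w ∈ genMon G (Function.update id b a), w z ≠ w y := by
    intro z hz w hw hzy
    rcases SameBlock.of_apply hblock ha hb hw (Or.inl hzy) with hzy | ⟨g, hg, hzg, hyg⟩
    · exact hy (hzy ▸ hz)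
    · exact hy (image_eq_of_mem_image_of_mem hblock hg hzg hz ▸ hyg)
  refine ⟨_, card_image_univ_update_id hab, {a, y}, {b, y}, card_pair fun h => hy (h ▸ ha),
    card_pair fun h => hy (h ▸ hb), fun hAB => ?_, fun w hw => ?_⟩
  · have : a ∈ ({b, y} : Finset (Fin n)) := hAB ▸ mem_insert_self a {y}
    simp only [mem_insert, mem_singleton] at this
    exact this.elim hab fun h => hy (h ▸ ha)
  · rw [card_image_pair_eq_one_iff, card_image_pair_eq_one_iff]
    exact iff_of_false (hsep a ha w hw) (hsep b hb w hw)

lemma three_le_of_card_eq_two {n : ℕ} {A B : Finset (Fin n)} (hA : #A = 2) (hB : #B = 2)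
    (hAB : A ≠ B) : 3 ≤ n := by
  by_contra! hn
  have huniv : ∀ C : Finset (Fin n), #C = 2 → C = univ := fun C hC =>
    eq_univ_of_card C (by have := card_le_univ C; simp at this ⊢; omega)
  exact hAB ((huniv A hA).trans (huniv B hB).symm)

theorem primitive_iff_2_set_distinguishable {n : ℕ}
    (G : Subgroup (Equiv.Perm (Fin n))) :
    IsPrimitive' G ↔
      ∀ f : Fin n → Fin n, (univ.image f).card = n - 1 →
        ∀ A B : Finset (Fin n), A.card = 2 → B.card = 2 → A ≠ B →
          ∃ g ∈ genMon G f,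
            Xor' ((A.image g).card = 1) ((B.image g).card = 1) := by
  constructor
  · intro hG f hf A B hA hB hAB
    by_contra! hxor
    exact not_indistinguishable_of_isPrimitive' hG (three_le_of_card_eq_two hA hB hAB) hf hA hB
      hAB fun w hw => (not_xor _ _).mp (hxor w hw)
  · rintro hdist ⟨Δ, h1, h2, hblock⟩
    obtain ⟨f, hf, A, B, hA, hB, hAB, hind⟩ := exists_indistinguishable_of_block h1 h2 hblock
    obtain ⟨w, hw, hxor⟩ := hdist f hf A B hA hB hAB
    exact (not_xor _ _).mpr (hind w hw) hxor
end

section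
/- Let G be a permutation group on [n] with n ≥ 5. If for every transformation f : [n] → [n] of rank n−1 and every two distinct subsets S, T of [n] each of size at least 2, there exists a transformation h in the monoid generated by G ∪ {f} with |h(S)| ≠ |h(T)|, then for every such f and every pair of disjoint 2-element subsets there exists a transformation in the monoid mapping exactly one of the two 2-sets to a singleton. -/
open Finset

theorem diff_card_implies_disjoint_2_set_distinguishable {n : ℕ} (hn : 5 ≤ n)
    (G : Subgroup (Equiv.Perm (Fin n)))
    (H : ∀ f : Fin n → Fin n, (univ.image f).card = n - 1 →
      ∀ S T : Finset (Fin n), 2 ≤ S.card → 2 ≤ T.card → S ≠ T →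
        ∃ h ∈ genMon G f, (S.image h).card ≠ (T.image h).card) :
    ∀ f : Fin n → Fin n, (univ.image f).card = n - 1 →
      ∀ A B : Finset (Fin n), A.card = 2 → B.card = 2 → Disjoint A B →
        ∃ h ∈ genMon G f,
          Xor' ((A.image h).card = 1) ((B.image h).card = 1) := by
  intro f hf A B hA hB hAB
  have hne : A ≠ B := by
    rintro rfl
    have : A = ∅ := disjoint_self.mp hAB
    simp [this] at hA
  obtain ⟨h, hmem, hcard⟩ := H f hf A B hA.ge hB.ge hne
  refine ⟨h, hmem, ?_⟩
  have hA1 : 1 ≤ (A.image h).card := by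
    rw [Nat.one_le_iff_ne_zero, ← Nat.pos_iff_ne_zero, card_pos]
    exact (nonempty_of_ne_empty (by rintro rfl; simp at hA)).image h
  have hA2 : (A.image h).card ≤ 2 := hA ▸ card_image_le
  have hB1 : 1 ≤ (B.image h).card := by
    rw [Nat.one_le_iff_ne_zero, ← Nat.pos_iff_ne_zero, card_pos]
    exact (nonempty_of_ne_empty (by rintro rfl; simp at hB)).image h
  have hB2 : (B.image h).card ≤ 2 := hB ▸ card_image_le
  rcases Nat.lt_or_ge (A.image h).card 2 with h1 | h1
  · left
    constructor
    · omega
    · omega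
  · right
    constructor
    · omega
    · omega
end

section
/- Let G be a permutation group on [n] with n > 2, and fix a 2-subset {a,b} ⊆ [n] such that g({a,b}) = {a,b} for every g ∈ G. Let c ∈ [n] \ {a,b} and let f : [n] → [n] be the idempotent of rank n−1 with f(a) = f(b) = b and f fixing all other points. Then no element h of the monoid generated by G ∪ {f} maps {a,c} or {b,c} to a singleton set, i.e. neither h({a,c}) nor h({b,c}) is a singleton. -/
open Finset

theorem stabilized_2_set_blocks_collapsing {n : ℕ} (hn : 2 < n)
    (G : Subgroup (Equiv.Perm (Fin n)))
    (a b c : Fin n) (hab : a ≠ b) (hca : c ≠ a) (hcb : c ≠ b)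
    (hstab : ∀ g ∈ G, ({a, b} : Finset (Fin n)).image ⇑g = {a, b})
    (f : Fin n → Fin n) (hfa : f a = b) (hfix : ∀ x, x ≠ a → f x = x) :
    ∀ h ∈ genMon G f,
      (({a, c} : Finset (Fin n)).image h).card ≠ 1 ∧
      (({b, c} : Finset (Fin n)).image h).card ≠ 1 := by
  -- the invariant
  set Q : Function.End (Fin n) → Prop := fun h =>
    (∀ x : Fin n, (h x = a ∨ h x = b) ↔ (x = a ∨ x = b)) ∧
    (∀ x y : Fin n, h x = h y → x = y ∨ ((x = a ∨ x = b) ∧ (y = a ∨ y = b))) with hQ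
  have hone : Q 1 := by
    constructor
    · intro x; rfl
    · intro x y hxy; exact Or.inl hxy
  have hmul : ∀ h1 h2, Q h1 → Q h2 → Q (h1 * h2) := by
    intro h1 h2 ⟨q1a, q1b⟩ ⟨q2a, q2b⟩
    constructor
    · intro x
      have : (h1 * h2) x = h1 (h2 x) := rfl
      rw [this, q1a, q2a]
    · intro x y hxy
      have hxy' : h1 (h2 x) = h1 (h2 y) := hxy
      rcases q1b _ _ hxy' with he | ⟨hx, hy⟩
      · rcases q2b _ _ he with he2 | hmem
        · exact Or.inl he2
        · exact Or.inr hmem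
      · exact Or.inr ⟨(q2a x).mp hx, (q2a y).mp hy⟩
  -- the submonoid of elements satisfying Q
  let S : Submonoid (Function.End (Fin n)) :=
    { carrier := {h | Q h}
      one_mem' := hone
      mul_mem' := fun {h1 h2} hh1 hh2 => hmul h1 h2 hh1 hh2 }
  have hgen : permSet G ∪ {f} ⊆ S.carrier := by
    rintro h (⟨g, hg, rfl⟩ | hf)
    · -- g ∈ G case
      have him := hstab g hg
      have hga : g a = a ∨ g a = b := by
        have : g a ∈ ({a, b} : Finset (Fin n)) := by
          rw [← him]; exact Finset.mem_image_of_mem _ (by simp)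
        simpa using this
      have hgb : g b = a ∨ g b = b := by
        have : g b ∈ ({a, b} : Finset (Fin n)) := by
          rw [← him]; exact Finset.mem_image_of_mem _ (by simp)
        simpa using this
      constructor
      · intro x
        constructor
        · intro hx
          have hx' : g x ∈ ({a, b} : Finset (Fin n)) := by simpa using hx
          rw [← him, Finset.mem_image] at hx'
          obtain ⟨y, hy, hyx⟩ := hx'
          have : x = y := g.injective hyx.symm
          subst this
          simpa using hy
        · rintro (rfl | rfl)
          · exact hga
          · exact hgb
      · intro x y hxy
        exact Or.inl (g.injective hxy)
    · -- f case
      have hf : h = f := hf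
      subst hf
      have hfb : h b = b := hfix b (Ne.symm hab)
      constructor
      · intro x
        constructor
        · intro hx
          by_cases hxa : x = a
          · exact Or.inl hxa
          · rw [hfix x hxa] at hx; exact hx
        · rintro (rfl | rfl)
          · exact Or.inr hfa
          · exact Or.inr hfb
      · intro x y hxy
        by_cases hxa : x = a
        · by_cases hya : y = a
          · exact Or.inl (hxa.trans hya.symm)
          · subst hxa
            rw [hfa, hfix y hya] at hxy
            exact Or.inr ⟨Or.inl rfl, Or.inr hxy.symm⟩
        · by_cases hya : y = a
          · subst hya
            rw [hfa, hfix x hxa] at hxy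
            exact Or.inr ⟨Or.inr hxy, Or.inl rfl⟩
          · rw [hfix x hxa, hfix y hya] at hxy
            exact Or.inl hxy
  have hsub : genMon G f ≤ S := Submonoid.closure_le.mpr hgen
  intro h hh
  obtain ⟨_, qb⟩ : Q h := hsub hh
  constructor
  · intro hcard
    have himg : ({a, c} : Finset (Fin n)).image h = {h a, h c} := by
      exact (Finset.image_insert _ _ _).trans (congrArg _ (Finset.image_singleton _ _))
    rw [himg] at hcard
    have hac : h a = h c := by
      by_contra hne
      rw [Finset.card_pair hne] at hcard
      omega
    rcases qb _ _ hac with he | ⟨_, hc⟩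
    · exact hca he.symm
    · rcases hc with h1 | h1
      · exact hca h1
      · exact hcb h1
  · intro hcard
    have himg : ({b, c} : Finset (Fin n)).image h = {h b, h c} := by
      exact (Finset.image_insert _ _ _).trans (congrArg _ (Finset.image_singleton _ _))
    rw [himg] at hcard
    have hbc : h b = h c := by
      by_contra hne
      rw [Finset.card_pair hne] at hcard
      omega
    rcases qb _ _ hbc with he | ⟨_, hc⟩
    · exact hcb he.symm
    · rcases hc with h1 | h1
      · exact hca h1
      · exact hcb h1
end

section
/- Let G be a transitive permutation group on [n] and A, B ⊆ [n] with |A| · |B| < n. Then there exists g ∈ G such that g(A) ∩ B = ∅. -/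
open Finset

set_option maxHeartbeats 1000000 in
theorem neumann_separation {n : ℕ} (G : Subgroup (Equiv.Perm (Fin n)))
    (hG : ∀ a b : Fin n, ∃ g ∈ G, g a = b)
    (A B : Finset (Fin n)) (h : A.card * B.card < n) :
    ∃ g ∈ G, Disjoint (A.image ⇑g) B := by
  classical
  have hn : 0 < n := lt_of_le_of_lt (Nat.zero_le _) h
  set S : Finset (Equiv.Perm (Fin n)) := Finset.univ.filter (· ∈ G) with hS
  have h1 : (1 : Equiv.Perm (Fin n)) ∈ S := by simp [hS, G.one_mem]
  have key : ∀ a b : Fin n, (S.filter (fun g => g a = b)).card = (S.filter (fun g => g a = a)).card := by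
    intro a b
    obtain ⟨p, hpG, hpa⟩ := hG a b
    apply Finset.card_bij' (fun g _ => p⁻¹ * g) (fun g _ => p * g)
    · intro g hg
      simp only [hS, Finset.mem_filter, Finset.mem_univ, true_and] at hg ⊢
      refine ⟨G.mul_mem (G.inv_mem hpG) hg.1, ?_⟩
      simp [Equiv.Perm.mul_apply, hg.2, ← hpa]
    · intro g hg
      simp only [hS, Finset.mem_filter, Finset.mem_univ, true_and] at hg ⊢
      refine ⟨G.mul_mem hpG hg.1, ?_⟩
      simp [Equiv.Perm.mul_apply, hg.2, hpa]
    · intro g hg; group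
    · intro g hg; group
  set a0 : Fin n := ⟨0, hn⟩ with ha0
  set k : ℕ := (S.filter (fun g => g a0 = a0)).card with hk
  have hcardS : ∀ a : Fin n, S.card = n * (S.filter (fun g => g a = a)).card := by
    intro a
    have := Finset.card_eq_sum_card_fiberwise (s := S) (t := (Finset.univ : Finset (Fin n)))
      (f := fun g => g a) (fun g _ => Finset.mem_univ _)
    rw [this]
    rw [Finset.sum_congr rfl (fun b _ => key a b)]
    simp [mul_comm]
  have fiber_eq : ∀ a b : Fin n, (S.filter (fun g => g a = b)).card = k := by
    intro a b
    rw [key a b, hk]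
    have := (hcardS a).symm.trans (hcardS a0)
    exact Nat.eq_of_mul_eq_mul_left hn this
  have hk1 : 1 ≤ k := Finset.card_pos.2 ⟨1, by simp [hk, h1]⟩
  have count : ∑ g ∈ S, ((A.image ⇑g) ∩ B).card = A.card * B.card * k := by
    have step1 : ∀ g : Equiv.Perm (Fin n), ((A.image ⇑g) ∩ B).card = (A.filter (fun a => g a ∈ B)).card := by
      intro g
      have : (A.image ⇑g) ∩ B = (A.filter (fun a => g a ∈ B)).image ⇑g := by
        ext x
        simp only [Finset.mem_inter, Finset.mem_image, Finset.mem_filter]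
        constructor
        · rintro ⟨⟨a, ha, rfl⟩, hb⟩; exact ⟨a, ⟨ha, hb⟩, rfl⟩
        · rintro ⟨a, ⟨ha, hb⟩, rfl⟩; exact ⟨⟨a, ha, rfl⟩, hb⟩
      rw [this, Finset.card_image_of_injective _ g.injective]
    calc ∑ g ∈ S, ((A.image ⇑g) ∩ B).card
        = ∑ g ∈ S, (A.filter (fun a => g a ∈ B)).card :=
          Finset.sum_congr rfl fun g _ => step1 g
      _ = ∑ g ∈ S, ∑ a ∈ A, (if g a ∈ B then 1 else 0) :=
          Finset.sum_congr rfl fun g _ => Finset.card_filter _ _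
      _ = ∑ a ∈ A, ∑ g ∈ S, (if g a ∈ B then 1 else 0) := Finset.sum_comm
      _ = ∑ a ∈ A, (S.filter (fun g => g a ∈ B)).card :=
          Finset.sum_congr rfl fun a _ => (Finset.card_filter _ _).symm
      _ = ∑ a ∈ A, ∑ b ∈ B, (S.filter (fun g => g a = b)).card :=
          Finset.sum_congr rfl fun a _ =>
            (Finset.sum_card_fiberwise_eq_card_filter S B (fun g => g a)).symm
      _ = ∑ a ∈ A, ∑ b ∈ B, k := by
          exact Finset.sum_congr rfl fun a _ => Finset.sum_congr rfl fun b _ => fiber_eq a b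
      _ = A.card * B.card * k := by simp [mul_assoc]
  by_contra hcon
  push_neg at hcon
  have hpos : ∀ g ∈ S, 1 ≤ ((A.image ⇑g) ∩ B).card := by
    intro g hg
    have hgG : g ∈ G := (Finset.mem_filter.1 hg).2
    have := hcon g hgG
    rw [Finset.disjoint_iff_inter_eq_empty] at this
    exact Finset.card_pos.2 (Finset.nonempty_iff_ne_empty.2 this)
  have : S.card ≤ ∑ g ∈ S, ((A.image ⇑g) ∩ B).card := by
    calc S.card = ∑ g ∈ S, 1 := by simp
      _ ≤ _ := Finset.sum_le_sum hpos
  rw [count, hcardS a0, ← hk] at this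
  have h2 : n ≤ A.card * B.card := Nat.le_of_mul_le_mul_right this hk1
  omega
end
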